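/- For every finite model M and every nonempty team X over {z,u,x,y} encoding a 3-CNF instance Θ (three assignments per clause recording clause index, literal position, variable, and parity), the team X supports the InqBT formula φ := ( =(x,y) → ∃ⁱw (C(w) ∧ w ≠ z) ) if and only if Θ is unsatisfiable. -/

import Mathlib

/-- A first-order signature. -/
structure Sig where
  Func : Type
  farity : Func → ℕ
  Rel : Type
  rarity : Rel → ℕ

/-- Terms over a signature; variables are natural numbers. -/
inductive Tm (σ : Sig) : Type where
  | var : ℕ → Tm σ
  | func : (f : σ.Func) → (Fin (σ.farity f) → Tm σ) → Tm σ

/-- Formulas of InqBT+[x]: atoms, ⊥, ∧, inquisitive disjunction ⩒ (`ivee`),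
    →, ∀ (`all`), inquisitive existential ∃ⁱ (`iex`), and [x] (`box`). -/
inductive Fm (σ : Sig) : Type where
  | rel : (R : σ.Rel) → (Fin (σ.rarity R) → Tm σ) → Fm σ
  | eq : Tm σ → Tm σ → Fm σ
  | bot : Fm σ
  | and : Fm σ → Fm σ → Fm σ
  | ivee : Fm σ → Fm σ → Fm σ
  | imp : Fm σ → Fm σ → Fm σ
  | all : ℕ → Fm σ → Fm σ
  | iex : ℕ → Fm σ → Fm σ
  | box : ℕ → Fm σ → Fm σ

/-- A first-order model. -/
structure Model (σ : Sig) where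
  D : Type
  nonempty : Nonempty D
  interpFunc : (f : σ.Func) → (Fin (σ.farity f) → D) → D
  interpRel : (R : σ.Rel) → (Fin (σ.rarity R) → D) → Prop

variable {σ : Sig}

/-- Value of a term under an assignment. -/
def Tm.val (M : Model σ) (g : ℕ → M.D) : Tm σ → M.D
  | .var n => g n
  | .func f ts => M.interpFunc f (fun i => (ts i).val M g)

/-- Free variables of a term. -/
def Tm.fv : Tm σ → Finset ℕ
  | .var n => {n}
  | .func _ ts => Finset.univ.biUnion (fun i => (ts i).fv)

/-- Free variables of a formula. -/
def Fm.fv : Fm σ → Finset ℕ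
  | .rel _ ts => Finset.univ.biUnion (fun i => (ts i).fv)
  | .eq t₁ t₂ => t₁.fv ∪ t₂.fv
  | .bot => ∅
  | .and φ ψ => φ.fv ∪ ψ.fv
  | .ivee φ ψ => φ.fv ∪ ψ.fv
  | .imp φ ψ => φ.fv ∪ ψ.fv
  | .all x φ => φ.fv.erase x
  | .iex x φ => φ.fv.erase x
  | .box x φ => φ.fv.erase x

/-- The team `X[x↦d]`, assigning the constant value `d` to `x` throughout `X`. -/
def cext (M : Model σ) (X : Set (ℕ → M.D)) (x : ℕ) (d : M.D) : Set (ℕ → M.D) :=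
  (fun g => Function.update g x d) '' X

/-- The team `X[x↦D]`, assigning all possible values to `x`. -/
def allext (M : Model σ) (X : Set (ℕ → M.D)) (x : ℕ) : Set (ℕ → M.D) :=
  ⋃ d : M.D, cext M X x d

/-- Team-semantic support relation `M ⊨_X φ` for InqBT+[x]. -/
def Support (M : Model σ) : Fm σ → Set (ℕ → M.D) → Prop
  | .rel R ts, X => ∀ g ∈ X, M.interpRel R (fun i => (ts i).val M g)
  | .eq t₁ t₂, X => ∀ g ∈ X, t₁.val M g = t₂.val M g
  | .bot, X => X = ∅
  | .and φ ψ, X => Support M φ X ∧ Support M ψ X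
  | .ivee φ ψ, X => Support M φ X ∨ Support M ψ X
  | .imp φ ψ, X => ∀ Y ⊆ X, Support M φ Y → Support M ψ Y
  | .all x φ, X => ∀ d : M.D, Support M φ (cext M X x d)
  | .iex x φ, X => ∃ d : M.D, Support M φ (cext M X x d)
  | .box x φ, X => Support M φ (allext M X x)

/-- `?φ := φ ⩒ ¬φ`, where `¬φ := φ → ⊥`. -/
def qmark {σ : Sig} (φ : Fm σ) : Fm σ := .ivee φ (.imp φ .bot)

/-- The value question `λt := ∀x ?(x = t)` (with `x` not occurring in `t`). -/
def lamT {σ : Sig} (x : ℕ) (t : Tm σ) : Fm σ := .all x (qmark (.eq (.var x) t))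

/-- The value question `λz` for a variable `z` (bound variable chosen fresh). -/
def lamVar {σ : Sig} (z : ℕ) : Fm σ := lamT (z + 1) (.var z)

/-- The dependence atom `=(x, y) := λx → λy`. -/
def depF {σ : Sig} (x y : ℕ) : Fm σ := .imp (lamVar x) (lamVar y)

/-- `s ≠ t := (s = t) → ⊥`. -/
def neqF {σ : Sig} (s t : Tm σ) : Fm σ := .imp (.eq s t) .bot

/-- The vocabulary with one unary predicate `C` (marking clause indices). -/
abbrev Sig19 : Sig := ⟨Empty, fun f => f.elim, Unit, fun _ => 1⟩

/-- The (finite) domain: clause indices, literal positions, propositional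
    variables, and parities. -/
abbrev D19 (n V : ℕ) : Type := Fin n ⊕ (Fin 3 ⊕ (Fin V ⊕ Bool))

/-- The finite model associated with a 3-CNF instance: `C` holds exactly of
    the clause indices. -/
def M19 (n V : ℕ) : Model Sig19 where
  D := D19 n V
  nonempty := ⟨Sum.inr (Sum.inl 0)⟩
  interpFunc := fun f => f.elim
  interpRel := fun _ v => ∃ i : Fin n, v 0 = Sum.inl i

/-- The team encoding a 3-CNF instance `Θ` (a clause `Θ i` is a function
    from positions `j ∈ Fin 3` to literals `(variable, parity)`): for each
    clause `i` and position `j` it contains the assignments with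
    `z = i`, `u = j`, `x = the variable of the j-th literal`, and
    `y = its parity`, where `z = 0`, `u = 1`, `x = 2`, `y = 3`. -/
def X19 (n V : ℕ) (Θ : Fin n → Fin 3 → Fin V × Bool) :
    Set (ℕ → D19 n V) :=
  { g | ∃ (i : Fin n) (j : Fin 3),
      g 0 = Sum.inl i ∧
      g 1 = Sum.inr (Sum.inl j) ∧
      g 2 = Sum.inr (Sum.inr (Sum.inl (Θ i j).1)) ∧
      g 3 = Sum.inr (Sum.inr (Sum.inr (Θ i j).2)) }

/-- `φ := ( =(x,y) → ∃ⁱw (C(w) ∧ w ≠ z) )`, with `x = 2`, `y = 3`,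
    `z = 0`, and `w` the fresh variable `4`. -/
def phi19 : Fm Sig19 :=
  .imp (depF 2 3)
       (.iex 4 (.and (.rel () (fun _ => .var 4)) (neqF (.var 4) (.var 0))))


section Helpers

variable {M : Model σ}

lemma mem_cext {X : Set (ℕ → M.D)} {x : ℕ} {d : M.D} {h : ℕ → M.D} :
    h ∈ cext M X x d ↔ ∃ g ∈ X, Function.update g x d = h := Set.mem_image _ _ _

lemma support_neg_eq {s t : Tm σ} {Y : Set (ℕ → M.D)} :
    Support M (.imp (.eq s t) .bot) Y ↔ ∀ g ∈ Y, s.val M g ≠ t.val M g := by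
  constructor
  · intro H g hg heq
    have h1 : Support M (.eq s t) {g} := by
      intro g' hg'
      rw [Set.mem_singleton_iff] at hg'
      subst hg'; exact heq
    have := H {g} (Set.singleton_subset_iff.2 hg) h1
    exact (Set.singleton_ne_empty g) this
  · intro H Z hZ hsupp
    ext g
    simp only [Set.mem_empty_iff_false, iff_false]
    intro hg
    exact H g (hZ hg) (hsupp g hg)

lemma support_lamVar {m : ℕ} {Z : Set (ℕ → M.D)} :
    Support M (lamVar m) Z ↔ ∀ g ∈ Z, ∀ g' ∈ Z, g m = g' m := by
  have hval : ∀ (d : M.D) (h : ℕ → M.D), h ∈ cext M Z (m+1) d →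
      h (m+1) = d ∧ ∃ g ∈ Z, h m = g m := by
    intro d h hh
    obtain ⟨g, hg, rfl⟩ := mem_cext.1 hh
    refine ⟨Function.update_self _ _ _, g, hg, Function.update_of_ne (by omega) _ _⟩
  constructor
  · intro H g hg g' hg'
    have hd := H (g m)
    rcases hd with hd | hd
    · -- support of eq on cext
      have h1 := hd _ (mem_cext.2 ⟨g', hg', rfl⟩)
      simp only [Tm.val, Function.update_self,
        Function.update_of_ne (show m ≠ m + 1 by omega)] at h1
      exact h1
    · -- negation case
      rw [support_neg_eq] at hd
      exfalso
      have := hd _ (mem_cext.2 ⟨g, hg, rfl⟩)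
      simp only [Tm.val, Function.update_self,
        Function.update_of_ne (show m ≠ m + 1 by omega)] at this
      exact this rfl
  · intro H d
    by_cases hcase : ∀ g ∈ Z, g m = d
    · left
      intro h hh
      obtain ⟨g, hg, rfl⟩ := mem_cext.1 hh
      simp only [Tm.val, Function.update_self,
        Function.update_of_ne (show m ≠ m + 1 by omega)]
      exact (hcase g hg).symm
    · right
      rw [support_neg_eq]
      intro h hh
      obtain ⟨g, hg, rfl⟩ := mem_cext.1 hh
      simp only [Tm.val, Function.update_self,
        Function.update_of_ne (show m ≠ m + 1 by omega)]
      push_neg at hcase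
      obtain ⟨g0, hg0, hne⟩ := hcase
      intro hcontra
      exact hne ((H g0 hg0 g hg).trans hcontra.symm)

lemma support_depF {a b : ℕ} {Y : Set (ℕ → M.D)} :
    Support M (depF a b) Y ↔ ∀ g ∈ Y, ∀ g' ∈ Y, g a = g' a → g b = g' b := by
  constructor
  · intro H g hg g' hg' hab
    have hsub : ({g, g'} : Set (ℕ → M.D)) ⊆ Y := by
      intro h hh
      rcases hh with h1 | h1
      · exact h1 ▸ hg
      · exact h1 ▸ hg'
    have hla : Support M (lamVar a) {g, g'} := by
      rw [support_lamVar]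
      rintro h (rfl | rfl) h' (rfl | rfl) <;>
        first | rfl | exact hab | exact hab.symm
    have := H {g, g'} hsub hla
    rw [support_lamVar] at this
    exact this g (by left; rfl) g' (by right; rfl)
  · intro H Z hZ hZa
    rw [support_lamVar] at hZa ⊢
    intro g hg g' hg'
    exact H g (hZ hg) g' (hZ hg') (hZa g hg g' hg')

end Helpers

/-- The team encoding a 3-CNF instance `Θ` supports `φ` in the associated
    finite model iff `Θ` is unsatisfiable. -/
theorem stmt19 (n V : ℕ) (hn : 1 ≤ n) (Θ : Fin n → Fin 3 → Fin V × Bool) :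
    Support (M19 n V) phi19 (X19 n V Θ) ↔
      ¬ ∃ f : Fin V → Bool, ∀ i : Fin n, ∃ j : Fin 3,
          f (Θ i j).1 = (Θ i j).2 := by
  classical
  have hval01 : ∀ (d : D19 n V) (h : ℕ → D19 n V) (Y : Set (ℕ → D19 n V)),
      h ∈ cext (M19 n V) Y 4 d → h 4 = d ∧ ∃ g ∈ Y, h 0 = g 0 := by
    intro d h Y hh
    obtain ⟨g, hg, rfl⟩ := mem_cext.1 hh
    exact ⟨Function.update_self _ _ _, g, hg, Function.update_of_ne (by omega) _ _⟩
  constructor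
  · rintro hsup ⟨f, hf⟩
    -- team of satisfied literal occurrences
    set Y : Set (ℕ → D19 n V) := { g | ∃ (i : Fin n) (j : Fin 3),
        g 0 = Sum.inl i ∧
        g 1 = Sum.inr (Sum.inl j) ∧
        g 2 = Sum.inr (Sum.inr (Sum.inl (Θ i j).1)) ∧
        g 3 = Sum.inr (Sum.inr (Sum.inr (Θ i j).2)) ∧
        f (Θ i j).1 = (Θ i j).2 } with hYdef
    have hYX : Y ⊆ X19 n V Θ := by
      rintro g ⟨i, j, h0, h1, h2, h3, _⟩
      exact ⟨i, j, h0, h1, h2, h3⟩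
    have hdep : Support (M19 n V) (depF 2 3) Y := by
      refine (support_depF (M := M19 n V)).2 ?_
      rintro g ⟨i, j, h0, h1, h2, h3, hs⟩ g' ⟨i', j', h0', h1', h2', h3', hs'⟩ h22
      rw [h2, h2'] at h22
      have hv : (Θ i j).1 = (Θ i' j').1 :=
        Sum.inl.inj (Sum.inr.inj (Sum.inr.inj h22))
      rw [h3, h3', ← hs, ← hs', hv]
    obtain ⟨d, hC, hneq⟩ := hsup Y hYX hdep
    -- rows of Y: every clause has one
    have hrow : ∀ i : Fin n, ∃ g ∈ Y, g 0 = Sum.inl i := by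
      intro i
      obtain ⟨j, hj⟩ := hf i
      refine ⟨fun k => if k = 0 then Sum.inl i else if k = 1 then Sum.inr (Sum.inl j)
        else if k = 2 then Sum.inr (Sum.inr (Sum.inl (Θ i j).1))
        else Sum.inr (Sum.inr (Sum.inr (Θ i j).2)), ⟨i, j, by simp, by simp, by simp, by simp, hj⟩, by simp⟩
    -- d is a clause index
    obtain ⟨g0, hg0Y, hg00⟩ := hrow ⟨0, hn⟩
    have hmem0 : Function.update g0 4 d ∈ cext (M19 n V) Y 4 d := mem_cext.2 ⟨g0, hg0Y, rfl⟩
    obtain ⟨i', hdi⟩ := hC _ hmem0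
    simp only [Tm.val, Function.update_self] at hdi
    -- but clause i' has a row in Y, contradicting hneq
    obtain ⟨g, hgY, hg0⟩ := hrow i'
    simp only [neqF] at hneq
    rw [support_neg_eq] at hneq
    have := hneq _ (mem_cext.2 ⟨g, hgY, rfl⟩)
    simp only [Tm.val, Function.update_self,
      Function.update_of_ne (show (0:ℕ) ≠ 4 by omega)] at this
    exact this (hdi.trans hg0.symm)
  · intro hunsat Y0 hYX0 hdep0
    obtain ⟨Y, rfl⟩ : ∃ Y' : Set (ℕ → D19 n V), Y' = Y0 := ⟨Y0, rfl⟩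
    have hYX : Y ⊆ X19 n V Θ := hYX0
    have hdep : ∀ g ∈ Y, ∀ g' ∈ Y, g 2 = g' 2 → g 3 = g' 3 := support_depF.1 hdep0
    -- some clause index is omitted from Y
    have homit : ∃ i : Fin n, ∀ g ∈ Y, g 0 ≠ Sum.inl i := by
      by_contra hcon
      push_neg at hcon
      apply hunsat
      set f : Fin V → Bool := fun v =>
        if h : ∃ b : Bool, ∃ g ∈ Y,
            g 2 = Sum.inr (Sum.inr (Sum.inl v)) ∧ g 3 = Sum.inr (Sum.inr (Sum.inr b))
          then h.choose else false with hfdef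
      refine ⟨f, fun i => ?_⟩
      obtain ⟨g, hgY, hg0⟩ := hcon i
      obtain ⟨i2, j, e0, e1, e2, e3⟩ := hYX hgY
      have hii : i2 = i := Sum.inl.inj (e0.symm.trans hg0)
      subst hii
      refine ⟨j, ?_⟩
      have hex : ∃ b : Bool, ∃ g' ∈ Y,
          g' 2 = Sum.inr (Sum.inr (Sum.inl (Θ i2 j).1)) ∧
          g' 3 = Sum.inr (Sum.inr (Sum.inr b)) := ⟨(Θ i2 j).2, g, hgY, e2, e3⟩
      have hfv : f (Θ i2 j).1 = hex.choose := dif_pos hex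
      rw [hfv]
      obtain ⟨g', hg'Y, e2', e3'⟩ := hex.choose_spec
      have h33 := hdep g hgY g' hg'Y (e2.trans e2'.symm)
      have : Sum.inr (Sum.inr (Sum.inr (Θ i2 j).2)) =
          (Sum.inr (Sum.inr (Sum.inr hex.choose)) : D19 n V) :=
        e3.symm.trans (h33.trans e3')
      exact (Sum.inr.inj (Sum.inr.inj (Sum.inr.inj this))).symm
    obtain ⟨i, hi⟩ := homit
    refine ⟨Sum.inl i, ?_, ?_⟩
    · -- C(w)
      intro h hh
      obtain ⟨h4, g, hgY, h0⟩ := hval01 _ _ _ hh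
      exact ⟨i, h4⟩
    · -- w ≠ z
      simp only [neqF]
      rw [support_neg_eq]
      intro h hh
      obtain ⟨h4, g, hgY, h0⟩ := hval01 _ _ _ hh
      show h 4 ≠ h 0
      rw [h4, h0]
      exact fun e => hi g hgY e.symm
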